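/- arXiv:2101.09550 — 7 statements merged into one kernel-verified Lean document; each statement's English description precedes it below -/
import Mathlib

section
/- Let n ≥ 1 and let A be an n×n real matrix that is hollow tridiagonal, i.e. A i i = 0 for004 all i and A i j = 0 whenever |i − j| ≥ 2. Then for every natural number t, the trace of the odd power A^(2t+1) vanishes: Tr(A^(2t+1)) = 0. -/
/-! Colour index `i` by the parity of `i`. A hollow tridiagonal matrix only links indices of
opposite colour, so `(A ^ k) i j`, a sum over walks of length `k` from `i` to `j`, vanishes unless
the colours of `i` and `j` differ by the parity of `k`; the diagonal entries of an odd power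
therefore all vanish. -/

namespace Matrix

variable {ι R : Type*} [Fintype ι] [DecidableEq ι] [Semiring R]

theorem pow_apply_eq_zero_of_odd_add {A : Matrix ι ι R} (c : ι → ℕ)
    (hA : ∀ i j, Even (c i + c j) → A i j = 0) (k : ℕ) :
    ∀ i j, Odd (c i + c j + k) → (A ^ k) i j = 0 := by
  induction k with
  | zero =>
    intro i j hodd
    have hij : i ≠ j := by
      rintro rfl
      exact Nat.not_even_iff_odd.mpr hodd (by simp)
    exact one_apply_ne hij
  | succ k ih =>
    intro i j hodd
    rw [pow_succ, mul_apply]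
    refine Finset.sum_eq_zero fun l _ => ?_
    rcases Nat.even_or_odd (c i + c l + k) with hil | hil
    · have hlj : Even (c l + c j) := by
        rw [Nat.even_iff] at hil ⊢
        rw [Nat.odd_iff] at hodd
        omega
      rw [hA l j hlj, mul_zero]
    · rw [ih i l hil, zero_mul]

theorem trace_pow_eq_zero_of_odd {A : Matrix ι ι R} (c : ι → ℕ)
    (hA : ∀ i j, Even (c i + c j) → A i j = 0) {k : ℕ} (hk : Odd k) :
    trace (A ^ k) = 0 :=
  Finset.sum_eq_zero fun i _ =>
    pow_apply_eq_zero_of_odd_add c hA k i i (by rw [Nat.odd_iff] at hk ⊢; omega)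

theorem apply_eq_zero_of_even_add_of_hollow_tridiagonal {n : ℕ} {A : Matrix (Fin n) (Fin n) R}
    (hdiag : ∀ i, A i i = 0)
    (htri : ∀ i j : Fin n, ((i : ℕ) + 2 ≤ (j : ℕ) ∨ (j : ℕ) + 2 ≤ (i : ℕ)) → A i j = 0)
    (i j : Fin n) (heven : Even ((i : ℕ) + j)) : A i j = 0 := by
  rcases eq_or_ne i j with rfl | hij
  · exact hdiag i
  · obtain ⟨m, hm⟩ := heven
    exact htri i j (by have := Fin.val_ne_of_ne hij; omega)

end Matrix

theorem hollow_tridiagonal_odd_power_trace_zero_general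
    (n : ℕ) (A : Matrix (Fin n) (Fin n) ℝ)
    (hdiag : ∀ i : Fin n, A i i = 0)
    (htri : ∀ i j : Fin n, ((i : ℕ) + 2 ≤ (j : ℕ) ∨ (j : ℕ) + 2 ≤ (i : ℕ)) → A i j = 0)
    (t : ℕ) :
    Matrix.trace (A ^ (2 * t + 1)) = 0 :=
  Matrix.trace_pow_eq_zero_of_odd (fun i : Fin n => (i : ℕ))
    (Matrix.apply_eq_zero_of_even_add_of_hollow_tridiagonal hdiag htri) (odd_two_mul_add_one t)

/-- For a hollow tridiagonal real `n × n` matrix `A` (zero diagonal, and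
`A i j = 0` when `|i - j| ≥ 2`), all odd power traces vanish: `Tr(A^(2t+1)) = 0`. -/
theorem hollow_tridiagonal_odd_power_trace_zero
    (n : ℕ) (hn : 1 ≤ n) (A : Matrix (Fin n) (Fin n) ℝ)
    (hdiag : ∀ i : Fin n, A i i = 0)
    (htri : ∀ i j : Fin n, ((i : ℕ) + 2 ≤ (j : ℕ) ∨ (j : ℕ) + 2 ≤ (i : ℕ)) → A i j = 0)
    (t : ℕ) :
    Matrix.trace (A ^ (2 * t + 1)) = 0 :=
  hollow_tridiagonal_odd_power_trace_zero_general n A hdiag htri t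
end

section
/- Let n ≥ 1 and let A be an n×n real symmetric tridiagonal matrix whose off-diagonal entries b_i = A_{i,i+1} = A_{i+1,i} are all nonzero (i.e. b_i ≠ 0 for i = 1, …, n−1). Then A has n distinct real eigenvalues; equivalently, the characteristic polynomial of A has n distinct real roots. -/
/-!
If `A` has zero entries above its superdiagonal and nonzero superdiagonal entries, row `k` of
`A v = μ v` expresses `A k (k+1) * v (k+1)` through `v 0, …, v k`, so an eigenvector is determined
by its first coordinate and every eigenspace is at most one-dimensional. A Hermitian matrix has an
orthonormal basis of eigenvectors, so two of its basis vectors never share an eigenvalue, and the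
`n` eigenvalues, i.e. the roots of the characteristic polynomial, are distinct.
-/

open Matrix

namespace Matrix

variable {n : ℕ}

theorem eq_zero_of_mulVec_eq_smul_of_apply_zero_eq_zero {R : Type*} [Ring R] [NoZeroDivisors R]
    [NeZero n] {A : Matrix (Fin n) (Fin n) R}
    (hupper : ∀ i j : Fin n, (i : ℕ) + 2 ≤ j → A i j = 0)
    (hsuper : ∀ i j : Fin n, (j : ℕ) = i + 1 → A i j ≠ 0)
    {μ : R} {v : Fin n → R} (hv : A *ᵥ v = μ • v) (h0 : v 0 = 0) : v = 0 := by
  suffices ∀ k : ℕ, ∀ i : Fin n, (i : ℕ) ≤ k → v i = 0 from funext fun i ↦ this i i le_rfl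
  intro k
  induction k with
  | zero =>
    intro i hi
    rwa [show i = 0 from Fin.ext (by simpa using hi)]
  | succ k ih =>
    intro i hi
    rcases hi.lt_or_eq with hi | hi
    · exact ih i (by omega)
    set i' : Fin n := ⟨k, by omega⟩
    have hrow : (A *ᵥ v) i' = A i' i * v i := by
      rw [mulVec, dotProduct]
      refine Finset.sum_eq_single i (fun j _ hji ↦ ?_) (absurd (Finset.mem_univ i))
      rcases le_or_gt (j : ℕ) k with hj | hj
      · rw [ih j hj, mul_zero]
      · rw [hupper i' j (show k + 2 ≤ (j : ℕ) by have := Fin.val_ne_of_ne hji; omega), zero_mul]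
    have : A i' i * v i = 0 := by rw [← hrow, hv, Pi.smul_apply, ih i' le_rfl, smul_zero]
    exact (mul_eq_zero.mp this).resolve_left (hsuper i' i (by simp [i', hi]))

theorem apply_zero_smul_sub_apply_zero_smul_eq_zero {R : Type*} [CommRing R] [NoZeroDivisors R]
    [NeZero n] {A : Matrix (Fin n) (Fin n) R}
    (hupper : ∀ i j : Fin n, (i : ℕ) + 2 ≤ j → A i j = 0)
    (hsuper : ∀ i j : Fin n, (j : ℕ) = i + 1 → A i j ≠ 0)
    {μ : R} {v w : Fin n → R} (hv : A *ᵥ v = μ • v) (hw : A *ᵥ w = μ • w) :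
    v 0 • w - w 0 • v = 0 := by
  refine eq_zero_of_mulVec_eq_smul_of_apply_zero_eq_zero hupper hsuper (μ := μ) ?_ ?_
  · rw [mulVec_sub, mulVec_smul, mulVec_smul, hv, hw, smul_sub, smul_comm μ, smul_comm μ]
  · simp [mul_comm]

theorem IsHermitian.eigenvalues_injective_of_superdiagonal_ne_zero {𝕜 : Type*} [RCLike 𝕜]
    [NeZero n] {A : Matrix (Fin n) (Fin n) 𝕜} (hA : A.IsHermitian)
    (hupper : ∀ i j : Fin n, (i : ℕ) + 2 ≤ j → A i j = 0)
    (hsuper : ∀ i j : Fin n, (j : ℕ) = i + 1 → A i j ≠ 0) :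
    Function.Injective hA.eigenvalues := by
  intro i j hij
  by_contra hne
  set b := hA.eigenvectorBasis
  have heig (k : Fin n) : A *ᵥ b k = (hA.eigenvalues k : 𝕜) • b k := by
    rw [hA.mulVec_eigenvectorBasis, RCLike.real_smul_eq_coe_smul (K := 𝕜)]
  have hparallel : b i 0 • b j - b j 0 • b i = 0 := WithLp.ofLp_injective 2 <| by
    simpa using apply_zero_smul_sub_apply_zero_smul_eq_zero hupper hsuper
      (heig i) (hij ▸ heig j)
  have hj0 : b j 0 = 0 := by
    simpa [inner_sub_right, inner_smul_right, b.orthonormal.inner_eq_zero hne] using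
      congr(inner 𝕜 (b i) $hparallel)
  refine b.orthonormal.ne_zero j (WithLp.ofLp_injective 2 ?_)
  exact eq_zero_of_mulVec_eq_smul_of_apply_zero_eq_zero hupper hsuper (heig j) hj0

end Matrix

/-- An unreduced real symmetric tridiagonal `n × n` matrix (symmetric,
`A i j = 0` for `|i - j| ≥ 2`, and all off-diagonal entries `A_{i,i+1}` nonzero) has
`n` distinct real eigenvalues, i.e. its characteristic polynomial has `n` distinct
real roots. -/
theorem unreduced_symm_tridiagonal_distinct_eigenvalues
    (n : ℕ) (hn : 1 ≤ n) (A : Matrix (Fin n) (Fin n) ℝ)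
    (hsymm : A.IsSymm)
    (htri : ∀ i j : Fin n, ((i : ℕ) + 2 ≤ (j : ℕ) ∨ (j : ℕ) + 2 ≤ (i : ℕ)) → A i j = 0)
    (hoff : ∀ i j : Fin n, (j : ℕ) = (i : ℕ) + 1 → A i j ≠ 0) :
    A.charpoly.roots.toFinset.card = n := by
  have : NeZero n := ⟨by omega⟩
  have hA : A.IsHermitian := isHermitian_iff_isSymm.mpr hsymm
  have hinj := hA.eigenvalues_injective_of_superdiagonal_ne_zero
    (fun i j h ↦ htri i j (Or.inl h)) hoff
  rw [hA.roots_charpoly_eq_eigenvalues,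
    Multiset.toFinset_card_of_nodup (Finset.univ.nodup.map (RCLike.ofReal_injective.comp hinj))]
  simp
end

section
/- Let J ≥ 1 and K' ≥ 1 be natural numbers, set n = min(J, K') and B = n + 1, and let L(J,K') be the Lamb-shift coupling matrix. Then the trace of its square admits the closed form: Tr(L(J,K')²) = 2·∑_{α=1}^{n} α(J+1−α)(K'+1−α) = (1/2)B⁴ − (1/3)B³(2K' + 2J + 7) + B²(J·K' + 2K' + 2J + 7/2) − (1/3)B(3J·K' + 4J + 4K' + 5). -/
/-- The Lamb-shift coupling matrix `L(J, K')`: the `(min J K' + 1) × (min J K' + 1)`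
real symmetric tridiagonal matrix with zero diagonal and off-diagonal entries
`L_{α,α+1} = L_{α+1,α} = √(α (J+1-α) (K'+1-α))` for `α = 1, …, min J K'` (1-based);
in 0-based indexing the `(i, i+1)` entry is `√((i+1) (J-i) (K'-i))`. -/
noncomputable def lambMatrix (J K' : ℕ) :
    Matrix (Fin (min J K' + 1)) (Fin (min J K' + 1)) ℝ :=
  Matrix.of fun i j =>
    if (j : ℕ) = (i : ℕ) + 1 then
      Real.sqrt (((i : ℕ) + 1) * ((J : ℝ) - (i : ℕ)) * ((K' : ℝ) - (i : ℕ)))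
    else if (i : ℕ) = (j : ℕ) + 1 then
      Real.sqrt (((j : ℕ) + 1) * ((J : ℝ) - (j : ℕ)) * ((K' : ℝ) - (j : ℕ)))
    else 0

/-! A symmetric tridiagonal matrix with zero diagonal has `Tr(L²) = 2 ∑ᵢ Lᵢ,ᵢ₊₁²`, and squaring
removes the square roots in the entries of `L(J, K')`; the resulting cubic sum is evaluated
by induction on `n`. -/

open Finset

lemma sum_range_succ_sum_range_succ_ite_eq_succ {M : Type*} [AddCommMonoid M] (n : ℕ)
    (b : ℕ → M) :
    ∑ i ∈ range (n + 1), ∑ j ∈ range (n + 1), (if j = i + 1 then b i else 0) =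
      ∑ i ∈ range n, b i := by
  simp only [sum_ite_eq', mem_range, sum_range_succ, lt_irrefl, if_false, add_zero]
  exact sum_congr rfl fun i hi => if_pos (by simpa using mem_range.mp hi)

def symmTridiag {R : Type*} [Zero R] (n : ℕ) (a : ℕ → R) :
    Matrix (Fin (n + 1)) (Fin (n + 1)) R :=
  Matrix.of fun i j => if (j : ℕ) = i + 1 then a i else if (i : ℕ) = j + 1 then a j else 0

theorem trace_symmTridiag_mul_self {R : Type*} [Semiring R] (n : ℕ) (a : ℕ → R) :
    (symmTridiag n a * symmTridiag n a).trace = 2 * ∑ i ∈ range n, a i * a i := by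
  have entry (i j : ℕ) :
      (if j = i + 1 then a i else if i = j + 1 then a j else 0) *
          (if i = j + 1 then a j else if j = i + 1 then a i else 0) =
        (if j = i + 1 then a i * a i else 0) + (if i = j + 1 then a j * a j else 0) := by
    split_ifs <;> first | omega | simp
  have sum_fin (f : ℕ → ℕ → R) : ∑ i : Fin (n + 1), ∑ j : Fin (n + 1), f i j =
      ∑ i ∈ range (n + 1), ∑ j ∈ range (n + 1), f i j := by
    simp only [sum_range]
  simp only [Matrix.trace, Matrix.diag, Matrix.mul_apply, symmTridiag, Matrix.of_apply, entry]
  refine (sum_fin fun i j => (if j = i + 1 then a i * a i else 0) +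
    (if i = j + 1 then a j * a j else 0)).trans ?_
  simp only [sum_add_distrib]
  rw [sum_comm (f := fun i j => if i = j + 1 then a j * a j else 0),
    sum_range_succ_sum_range_succ_ite_eq_succ, two_mul]

lemma lambMatrix_eq_symmTridiag (J K' : ℕ) :
    lambMatrix J K' =
      symmTridiag (min J K') fun i => √((i + 1) * ((J : ℝ) - i) * ((K' : ℝ) - i)) :=
  rfl

theorem trace_lambMatrix_mul_self (J K' : ℕ) :
    (lambMatrix J K' * lambMatrix J K').trace =
      2 * ∑ α ∈ Icc 1 (min J K'), (α : ℝ) * ((J : ℝ) + 1 - α) * ((K' : ℝ) + 1 - α) := by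
  rw [lambMatrix_eq_symmTridiag, trace_symmTridiag_mul_self, ← Ico_add_one_right_eq_Icc,
    sum_Ico_eq_sum_range, add_tsub_cancel_right]
  congr 1
  refine sum_congr rfl fun i hi => ?_
  have hJ : (i : ℝ) + 1 ≤ J := by exact_mod_cast (mem_range.mp hi).trans_le (min_le_left J K')
  have hK : (i : ℝ) + 1 ≤ K' := by exact_mod_cast (mem_range.mp hi).trans_le (min_le_right J K')
  rw [Real.mul_self_sqrt <| mul_nonneg (mul_nonneg (by positivity) (by linarith)) (by linarith)]
  push_cast
  ring

lemma two_mul_sum_Icc_eq (x y : ℝ) (n : ℕ) :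
    2 * ∑ α ∈ Icc 1 n, (α : ℝ) * (x + 1 - α) * (y + 1 - α) =
      (1 / 2) * ((n : ℝ) + 1) ^ 4
        - (1 / 3) * ((n : ℝ) + 1) ^ 3 * (2 * y + 2 * x + 7)
        + ((n : ℝ) + 1) ^ 2 * (x * y + 2 * y + 2 * x + 7 / 2)
        - (1 / 3) * ((n : ℝ) + 1) * (3 * x * y + 4 * x + 4 * y + 5) := by
  induction n with
  | zero => norm_num; ring
  | succ n ih =>
    rw [sum_Icc_succ_top (by omega), mul_add, ih]
    push_cast
    ring

theorem trace_sq_lambMatrix_general (J K' : ℕ) :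
    Matrix.trace (lambMatrix J K' * lambMatrix J K') =
        2 * ∑ α ∈ Finset.Icc 1 (min J K'),
          (α : ℝ) * ((J : ℝ) + 1 - α) * ((K' : ℝ) + 1 - α) ∧
      Matrix.trace (lambMatrix J K' * lambMatrix J K') =
        (1 / 2) * ((min J K' : ℝ) + 1) ^ 4
          - (1 / 3) * ((min J K' : ℝ) + 1) ^ 3 * (2 * (K' : ℝ) + 2 * (J : ℝ) + 7)
          + ((min J K' : ℝ) + 1) ^ 2 *
              ((J : ℝ) * (K' : ℝ) + 2 * (K' : ℝ) + 2 * (J : ℝ) + 7 / 2)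
          - (1 / 3) * ((min J K' : ℝ) + 1) *
              (3 * (J : ℝ) * (K' : ℝ) + 4 * (J : ℝ) + 4 * (K' : ℝ) + 5) := by
  refine ⟨trace_lambMatrix_mul_self J K', ?_⟩
  rw [trace_lambMatrix_mul_self, two_mul_sum_Icc_eq, Nat.cast_min]

/-- closed form for the trace of the square of the Lamb-shift
coupling matrix, with `n = min J K'` and `B = n + 1`:
`Tr(L(J,K')²) = 2 ∑_{α=1}^{n} α (J+1-α) (K'+1-α)`
`= (1/2)B⁴ - (1/3)B³(2K'+2J+7) + B²(JK'+2K'+2J+7/2) - (1/3)B(3JK'+4J+4K'+5)`. -/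
theorem trace_sq_lambMatrix (J K' : ℕ) (hJ : 1 ≤ J) (hK : 1 ≤ K') :
    Matrix.trace (lambMatrix J K' * lambMatrix J K') =
        2 * ∑ α ∈ Finset.Icc 1 (min J K'),
          (α : ℝ) * ((J : ℝ) + 1 - α) * ((K' : ℝ) + 1 - α) ∧
      Matrix.trace (lambMatrix J K' * lambMatrix J K') =
        (1 / 2) * ((min J K' : ℝ) + 1) ^ 4
          - (1 / 3) * ((min J K' : ℝ) + 1) ^ 3 * (2 * (K' : ℝ) + 2 * (J : ℝ) + 7)
          + ((min J K' : ℝ) + 1) ^ 2 *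
              ((J : ℝ) * (K' : ℝ) + 2 * (K' : ℝ) + 2 * (J : ℝ) + 7 / 2)
          - (1 / 3) * ((min J K' : ℝ) + 1) *
              (3 * (J : ℝ) * (K' : ℝ) + 4 * (J : ℝ) + 4 * (K' : ℝ) + 5) :=
  trace_sq_lambMatrix_general J K'
end

section
/- Let J ≥ 1 and K' be natural numbers with K' ≥ J (the saturated regime, corresponding to excitation number k ≥ N/2 + j), so that the Lamb-shift coupling matrix L(J,K') has size J+1. Then Tr(L(J,K')²) = (1/6)·J·(J+1)·(J+2)·(2K' + 1 − J). In particular, for fixed J the variance of the Lamb-shift eigenvalues, Var(Λ(J,K')) = Tr(L(J,K')²)/(J+1), is a linear function of K'. -/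
open Finset

section HollowTridiagonal

variable {R : Type*} [Semiring R]

def hollowTridiagonal (n : ℕ) (c : ℕ → R) : Matrix (Fin (n + 1)) (Fin (n + 1)) R :=
  Matrix.of fun i j =>
    if (j : ℕ) = (i : ℕ) + 1 then c i else if (i : ℕ) = (j : ℕ) + 1 then c j else 0

lemma hollowTridiagonal_mul_apply_swap (n : ℕ) (c : ℕ → R) (i j : Fin (n + 1)) :
    hollowTridiagonal n c i j * hollowTridiagonal n c j i =
      (if (j : ℕ) = i + 1 then c i * c i else 0) +
        (if (i : ℕ) = j + 1 then c j * c j else 0) := by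
  simp only [hollowTridiagonal, Matrix.of_apply]
  split_ifs <;> first | omega | simp

lemma sum_fin_ite_eq_succ (n k : ℕ) (a : R) :
    (∑ j : Fin (n + 1), if (j : ℕ) = k + 1 then a else 0) = if k < n then a else 0 := by
  rw [Fin.sum_univ_eq_sum_range (fun j => if j = k + 1 then a else 0), sum_ite_eq']
  simp

theorem trace_hollowTridiagonal_mul_self (n : ℕ) (c : ℕ → R) :
    (hollowTridiagonal n c * hollowTridiagonal n c).trace = 2 * ∑ i ∈ range n, c i * c i := by
  have above : (∑ i : Fin (n + 1), if (i : ℕ) < n then c i * c i else 0) =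
      ∑ i ∈ range n, c i * c i := by
    rw [Fin.sum_univ_eq_sum_range (fun i => if i < n then c i * c i else 0), sum_range_succ,
      if_neg (lt_irrefl n), add_zero]
    exact sum_congr rfl fun i hi => if_pos (mem_range.mp hi)
  simp only [Matrix.trace, Matrix.diag, Matrix.mul_apply, hollowTridiagonal_mul_apply_swap,
    sum_add_distrib]
  rw [sum_comm (f := fun i j : Fin (n + 1) => if (i : ℕ) = j + 1 then c j * c j else 0)]
  simp only [sum_fin_ite_eq_succ, above, two_mul]

end HollowTridiagonal

lemma lambMatrix_eq_hollowTridiagonal (J K' : ℕ) :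
    lambMatrix J K' = hollowTridiagonal (min J K')
      (fun i => √((i + 1) * ((J : ℝ) - i) * ((K' : ℝ) - i))) :=
  rfl

theorem sum_range_succ_mul_sub_mul_sub (x y : ℝ) (n : ℕ) :
    ∑ i ∈ range n, ((i : ℝ) + 1) * (x - i) * (y - i) =
      n * (n + 1) * (6 * x * y - 4 * (n - 1) * (x + y) + (n - 1) * (3 * n - 2)) / 12 := by
  induction n with
  | zero => simp
  | succ n ih =>
    rw [sum_range_succ, ih]
    push_cast
    ring

theorem trace_lambMatrix_mul_self_of_le {J K' : ℕ} (hK' : J ≤ K') :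
    (lambMatrix J K' * lambMatrix J K').trace =
      2 * ∑ i ∈ range J, ((i : ℝ) + 1) * ((J : ℝ) - i) * ((K' : ℝ) - i) := by
  rw [lambMatrix_eq_hollowTridiagonal, trace_hollowTridiagonal_mul_self, min_eq_left hK']
  congr 1
  refine sum_congr rfl fun i hi => Real.mul_self_sqrt ?_
  have hiJ : (i : ℝ) ≤ J := by exact_mod_cast (mem_range.mp hi).le
  have hJK : (J : ℝ) ≤ K' := by exact_mod_cast hK'
  have hJi : 0 ≤ (J : ℝ) - i := sub_nonneg.mpr hiJ
  have hKi : 0 ≤ (K' : ℝ) - i := by linarith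
  positivity

theorem trace_sq_lambMatrix_saturated_general (J : ℕ) :
    (∀ K' : ℕ, J ≤ K' →
        Matrix.trace (lambMatrix J K' * lambMatrix J K') =
          (1 / 6) * (J : ℝ) * ((J : ℝ) + 1) * ((J : ℝ) + 2) *
            (2 * (K' : ℝ) + 1 - (J : ℝ))) ∧
      ∃ a b : ℝ, ∀ K' : ℕ, J ≤ K' →
        Matrix.trace (lambMatrix J K' * lambMatrix J K') / ((J : ℝ) + 1) =
          a * (K' : ℝ) + b := by
  have trace_eq : ∀ K' : ℕ, J ≤ K' →
      Matrix.trace (lambMatrix J K' * lambMatrix J K') =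
        (1 / 6) * (J : ℝ) * ((J : ℝ) + 1) * ((J : ℝ) + 2) * (2 * (K' : ℝ) + 1 - (J : ℝ)) := by
    intro K' hK'
    rw [trace_lambMatrix_mul_self_of_le hK', sum_range_succ_mul_sub_mul_sub]
    ring
  refine ⟨trace_eq, J * (J + 2) / 3, J * (J + 2) * (1 - J) / 6, fun K' hK' => ?_⟩
  rw [trace_eq K' hK']
  field_simp
  ring

/-- in the saturated regime `K' ≥ J ≥ 1` (where the block has size `J + 1`),
`Tr(L(J,K')²) = (1/6) J (J+1) (J+2) (2K' + 1 - J)`; in particular, for fixed `J` the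
variance `Var(Λ(J,K')) = Tr(L(J,K')²)/(J+1)` of the Lamb-shift eigenvalues is a linear
function of `K'`. -/
theorem trace_sq_lambMatrix_saturated (J : ℕ) (hJ : 1 ≤ J) :
    (∀ K' : ℕ, J ≤ K' →
        Matrix.trace (lambMatrix J K' * lambMatrix J K') =
          (1 / 6) * (J : ℝ) * ((J : ℝ) + 1) * ((J : ℝ) + 2) *
            (2 * (K' : ℝ) + 1 - (J : ℝ))) ∧
      ∃ a b : ℝ, ∀ K' : ℕ, J ≤ K' →
        Matrix.trace (lambMatrix J K' * lambMatrix J K') / ((J : ℝ) + 1) =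
          a * (K' : ℝ) + b :=
  trace_sq_lambMatrix_saturated_general J
end

section
/- Let J ≥ 1 and K' ≥ 1 be natural numbers and let L(J,K') be the Lamb-shift coupling matrix. Then every eigenvalue λ of L(J,K') satisfies λ² ≤ (2/3)·(J+1)·(K'+1)·(J + K' + 2); equivalently, the spectral radius of L(J,K') is at most (2/√3)·√((J+1)(K'+1)(J+K'+2)/2). -/
open Finset

lemma Finset.sum_ite_le_of_subsingleton {ι : Type*} (s : Finset ι) {p : ι → Prop}
    [DecidablePred p] (hp : {i | p i}.Subsingleton) {c : ℝ} (hc : 0 ≤ c) :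
    ∑ i ∈ s, (if p i then c else 0) ≤ c := by
  rw [sum_ite, sum_const, sum_const_zero, add_zero, nsmul_eq_mul]
  have hcard : #(s.filter p) ≤ 1 :=
    card_le_one.2 fun a ha b hb => hp (mem_filter.1 ha).2 (mem_filter.1 hb).2
  exact mul_le_of_le_one_left hc (by exact_mod_cast hcard)

def Matrix.IsHollowTridiagonal {R : Type*} [Zero R] {n : ℕ} (A : Matrix (Fin n) (Fin n) R) :
    Prop :=
  ∀ i j : Fin n, (j : ℕ) ≠ i + 1 → (i : ℕ) ≠ j + 1 → A i j = 0

section Tridiagonal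

variable {n : ℕ} {A : Matrix (Fin n) (Fin n) ℝ} {c : ℝ}

lemma Matrix.IsHollowTridiagonal.sum_abs_le (hA : A.IsHollowTridiagonal)
    (hc : ∀ i j, |A i j| ≤ c) (i : Fin n) (s : Finset (Fin n)) :
    ∑ j ∈ s, |A i j| ≤ 2 * c := by
  have hc0 : 0 ≤ c := (abs_nonneg _).trans (hc i i)
  have hentry : ∀ j, |A i j| ≤
      (if (j : ℕ) = i + 1 then c else 0) + (if (i : ℕ) = j + 1 then c else 0) := by
    intro j
    split_ifs with h₁ h₂ h₂
    · omega
    · simpa using hc i j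
    · simpa using hc i j
    · simp [hA i j h₁ h₂]
  calc ∑ j ∈ s, |A i j|
      ≤ ∑ j ∈ s, ((if (j : ℕ) = i + 1 then c else 0) + (if (i : ℕ) = j + 1 then c else 0)) :=
        sum_le_sum fun j _ => hentry j
    _ ≤ c + c := by
        rw [sum_add_distrib]
        gcongr
        · exact s.sum_ite_le_of_subsingleton (fun a ha b hb => Fin.ext (ha.trans hb.symm)) hc0
        · exact s.sum_ite_le_of_subsingleton
            (fun a ha b hb => Fin.ext (Nat.succ_injective (ha.symm.trans hb))) hc0
    _ = 2 * c := by ring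

lemma Matrix.IsHollowTridiagonal.abs_le_of_mulVec_eq_smul (hA : A.IsHollowTridiagonal)
    (hc : ∀ i j, |A i j| ≤ c) {μ : ℝ} {v : Fin n → ℝ} (hv : v ≠ 0) (hμ : A.mulVec v = μ • v) :
    |μ| ≤ 2 * c := by
  have hμ' : Module.End.HasEigenvalue (Matrix.toLin' A) μ :=
    Module.End.hasEigenvalue_of_hasEigenvector
      ⟨Module.End.mem_eigenspace_iff.2 (by rwa [Matrix.toLin'_apply]), hv⟩
  obtain ⟨k, hk⟩ := eigenvalue_mem_ball hμ'
  rw [Metric.mem_closedBall, hA k k (by omega) (by omega), Real.dist_0_eq_abs] at hk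
  exact hk.trans (hA.sum_abs_le hc k _)

end Tridiagonal

lemma mul_sub_mul_sub_le {a b s : ℝ} (hs : 0 ≤ s) (hsa : s ≤ a) (hsb : s ≤ b) :
    s * (a - s) * (b - s) ≤ a * b * (a + b) / 8 := by
  have hsa' : s * (a - s) ≤ a ^ 2 / 4 := by nlinarith [sq_nonneg (a - 2 * s)]
  have hsb' : s * (b - s) ≤ b ^ 2 / 4 := by nlinarith [sq_nonneg (b - 2 * s)]
  nlinarith [mul_le_mul_of_nonneg_right hsa' (sub_nonneg.2 hsb),
    mul_le_mul_of_nonneg_right hsb' (sub_nonneg.2 hsa)]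

lemma isHollowTridiagonal_lambMatrix (J K' : ℕ) : (lambMatrix J K').IsHollowTridiagonal :=
  fun i j h₁ h₂ => by simp [lambMatrix, h₁, h₂]

lemma abs_lambMatrix_apply_le (J K' : ℕ) (i j : Fin (min J K' + 1)) :
    |lambMatrix J K' i j| ≤ √((J + 1) * (K' + 1) * ((J + 1) + (K' + 1)) / 8) := by
  have hentry : ∀ m : ℕ, m < min J K' →
      √((m + 1) * ((J : ℝ) - m) * ((K' : ℝ) - m)) ≤
        √((J + 1) * (K' + 1) * ((J + 1) + (K' + 1)) / 8) := by
    intro m hm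
    have hmJ : (m : ℝ) + 1 ≤ J := by exact_mod_cast (lt_min_iff.1 hm).1
    have hmK : (m : ℝ) + 1 ≤ K' := by exact_mod_cast (lt_min_iff.1 hm).2
    apply Real.sqrt_le_sqrt
    convert mul_sub_mul_sub_le (a := J + 1) (b := K' + 1) (s := m + 1) (by positivity)
      (by linarith) (by linarith) using 1
    ring
  simp only [lambMatrix, Matrix.of_apply]
  split_ifs with h₁ h₂
  · rw [abs_of_nonneg (Real.sqrt_nonneg _)]
    exact hentry i (by omega)
  · rw [abs_of_nonneg (Real.sqrt_nonneg _)]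
    exact hentry j (by omega)
  · simp only [abs_zero, Real.sqrt_nonneg]

theorem lambMatrix_eigenvalue_sq_bound_general
    (J K' : ℕ)
    (lam : ℝ) (v : Fin (min J K' + 1) → ℝ) (hv : v ≠ 0)
    (heig : (lambMatrix J K').mulVec v = lam • v) :
    lam ^ 2 ≤ (2 / 3) * ((J : ℝ) + 1) * ((K' : ℝ) + 1) * ((J : ℝ) + (K' : ℝ) + 2) := by
  have hlam := (isHollowTridiagonal_lambMatrix J K').abs_le_of_mulVec_eq_smul
    (abs_lambMatrix_apply_le J K') hv heig
  have hpos : (0 : ℝ) ≤ (J + 1) * (K' + 1) * ((J + 1) + (K' + 1)) := by positivity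
  calc lam ^ 2 = |lam| ^ 2 := (sq_abs lam).symm
    _ ≤ (2 * √((J + 1) * (K' + 1) * ((J + 1) + (K' + 1)) / 8)) ^ 2 := by gcongr
    _ = (J + 1) * (K' + 1) * ((J + 1) + (K' + 1)) / 2 := by
        rw [mul_pow, Real.sq_sqrt (by positivity)]; ring
    _ ≤ _ := by linarith

/-- every eigenvalue `λ` of the Lamb-shift coupling matrix `L(J,K')`
satisfies `λ² ≤ (2/3) (J+1) (K'+1) (J+K'+2)`, i.e. the spectral radius is at most
`(2/√3) √((J+1)(K'+1)(J+K'+2)/2)`. -/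
theorem lambMatrix_eigenvalue_sq_bound
    (J K' : ℕ) (hJ : 1 ≤ J) (hK : 1 ≤ K')
    (lam : ℝ) (v : Fin (min J K' + 1) → ℝ) (hv : v ≠ 0)
    (heig : (lambMatrix J K').mulVec v = lam • v) :
    lam ^ 2 ≤ (2 / 3) * ((J : ℝ) + 1) * ((K' : ℝ) + 1) * ((J : ℝ) + (K' : ℝ) + 2) :=
  lambMatrix_eigenvalue_sq_bound_general J K' lam v hv heig
end

section
/- There exists a constant C > 0 such that for every even natural number N ≥ 2 and every integer j with 0 ≤ j ≤ N/2, the degeneracy d_j = N!(2j+1)/((N/2−j)!(N/2+j+1)!) satisfies d_j ≤ C · 2^N / N. That is, the fraction of the 2^N spin states carried by any single angular momentum subspace (even the maximally degenerate one) is O(1/N) uniformly in j. -/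
/-!
For `N = 2m` one has `d_j = (2j+1) C(2m+1, m-j) / (2m+1)`, so it suffices to show
`(2j+1) C(2m+1, m-j) ≤ 2 · 4^m`. Going from `C(2m+1, m-i+1)` to `C(2m+1, m-i)` multiplies by
`(m+1-i)/(m+1+i) ≤ (m/(m+2))^i`, hence `C(2m+1, m-j)² ≤ (m/(m+2))^(j(j+1)) C(2m+1, m)²`.
By Bernoulli, `(m/(m+2))^K ≤ m/(m+2K)`, and with `(2j+1)² = 4K+1` for `K = j(j+1)` this Gaussian
decay absorbs the factor `(2j+1)²` at the cost of `2m+1`. The Wallis-type bound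
`(2m+1) C(2m,m)² ≤ 16^m` then controls `(2m+1) C(2m+1, m)²`.
-/

/-- The degeneracy `d_j = N!(2j+1)/((N/2-j)!(N/2+j+1)!)` of the collective
angular-momentum-`j` subspace of `N` spin-1/2 particles (as a rational number). -/
noncomputable def degeneracy (N j : ℕ) : ℚ :=
  (Nat.factorial N : ℚ) * (2 * (j : ℚ) + 1) /
    ((Nat.factorial (N / 2 - j) : ℚ) * (Nat.factorial (N / 2 + j + 1) : ℚ))

namespace Nat

theorem add_one_sub_mul_add_two_pow_le (m i : ℕ) :
    (m + 1 - i) * (m + 2) ^ i ≤ m ^ i * (m + 1 + i) := by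
  induction i with
  | zero => simp
  | succ i ih =>
    rcases le_or_gt m i with hmi | hmi
    · simp [show m + 1 - (i + 1) = 0 by omega]
    obtain ⟨s, rfl⟩ := Nat.exists_eq_add_of_lt hmi
    -- the two sides differ by `2 i (i + 1)`
    have one_step : (s + 1) * (i + s + 1 + 2) * (i + s + 1 + 1 + i)
        ≤ (i + s + 1) * (i + s + 1 + 1 + (i + 1)) * (s + 2) := by
      nlinarith [sq_nonneg i]
    rw [show i + s + 1 + 1 - i = s + 2 by omega] at ih
    rw [show i + s + 1 + 1 - (i + 1) = s + 1 by omega]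
    refine Nat.le_of_mul_le_mul_right (c := s + 2) ?_ (by omega)
    calc (s + 1) * (i + s + 1 + 2) ^ (i + 1) * (s + 2)
        = (s + 1) * (i + s + 1 + 2) * ((s + 2) * (i + s + 1 + 2) ^ i) := by ring
      _ ≤ (s + 1) * (i + s + 1 + 2) * ((i + s + 1) ^ i * (i + s + 1 + 1 + i)) := by gcongr
      _ = (s + 1) * (i + s + 1 + 2) * (i + s + 1 + 1 + i) * (i + s + 1) ^ i := by ring
      _ ≤ (i + s + 1) * (i + s + 1 + 1 + (i + 1)) * (s + 2) * (i + s + 1) ^ i := by gcongr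
      _ = (i + s + 1) ^ (i + 1) * (i + s + 1 + 1 + (i + 1)) * (s + 2) := by ring

theorem pow_mul_add_two_mul_le (m K : ℕ) : m ^ K * (m + 2 * K) ≤ (m + 2) ^ K * m := by
  have bernoulli := pow_add_mul_le_add_pow (a := m) (b := 2) (by positivity) (by positivity) K
  rcases K with _ | K
  · simp
  · calc m ^ (K + 1) * (m + 2 * (K + 1)) = (m ^ (K + 1) + (K + 1) * m ^ K * 2) * m := by ring
      _ ≤ (m + 2) ^ (K + 1) * m := by gcongr; simpa using bernoulli

theorem choose_middle_sub_succ_mul (m j : ℕ) (hj : j < m) :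
    (2 * m + 1).choose (m - (j + 1)) * (m + j + 2) = (2 * m + 1).choose (m - j) * (m - j) := by
  have h := choose_succ_right_eq (2 * m + 1) (m - (j + 1))
  rw [show m - (j + 1) + 1 = m - j by omega,
    show 2 * m + 1 - (m - (j + 1)) = m + j + 2 by omega] at h
  exact h.symm

theorem choose_middle_sub_sq_mul_pow_le (m j : ℕ) (hj : j ≤ m) :
    (2 * m + 1).choose (m - j) ^ 2 * (m + 2) ^ (j * (j + 1))
      ≤ m ^ (j * (j + 1)) * (2 * m + 1).choose m ^ 2 := by
  induction j with
  | zero => simp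
  | succ j ih =>
    set B := (2 * m + 1).choose m
    have ratio := add_one_sub_mul_add_two_pow_le m (j + 1)
    rw [show m + 1 - (j + 1) = m - j by omega, show m + 1 + (j + 1) = m + j + 2 by omega] at ratio
    have pow_eq (x : ℕ) :
        x ^ ((j + 1) * (j + 1 + 1)) = x ^ (j * (j + 1)) * (x ^ (j + 1)) ^ 2 := by
      rw [← pow_mul, ← pow_add]; ring_nf
    refine Nat.le_of_mul_le_mul_right (c := (m + j + 2) ^ 2) ?_ (by positivity)
    calc (2 * m + 1).choose (m - (j + 1)) ^ 2 * (m + 2) ^ ((j + 1) * (j + 1 + 1)) * (m + j + 2) ^ 2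
        = ((2 * m + 1).choose (m - (j + 1)) * (m + j + 2)) ^ 2 * (m + 2) ^ (j * (j + 1))
            * ((m + 2) ^ (j + 1)) ^ 2 := by rw [pow_eq]; ring
      _ = (2 * m + 1).choose (m - j) ^ 2 * (m + 2) ^ (j * (j + 1))
            * ((m - j) * (m + 2) ^ (j + 1)) ^ 2 := by rw [choose_middle_sub_succ_mul m j hj]; ring
      _ ≤ m ^ (j * (j + 1)) * B ^ 2 * (m ^ (j + 1) * (m + j + 2)) ^ 2 :=
          Nat.mul_le_mul (ih (by omega)) (Nat.pow_le_pow_left ratio 2)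
      _ = m ^ ((j + 1) * (j + 1 + 1)) * B ^ 2 * (m + j + 2) ^ 2 := by rw [pow_eq]; ring

theorem sq_mul_choose_middle_sub_sq_le (m j : ℕ) (hj : j ≤ m) :
    (2 * j + 1) ^ 2 * (2 * m + 1).choose (m - j) ^ 2
      ≤ (2 * m + 1) * (2 * m + 1).choose m ^ 2 := by
  obtain rfl | hm := Nat.eq_zero_or_pos m
  · simp [Nat.le_zero.mp hj]
  set K := j * (j + 1)
  set A := (2 * m + 1).choose (m - j)
  set B := (2 * m + 1).choose m
  have odd_sq : (2 * j + 1) ^ 2 = 4 * K + 1 := by ring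
  refine Nat.le_of_mul_le_mul_right (c := (m + 2) ^ K * (m + 2 * K)) ?_ (by positivity)
  calc (2 * j + 1) ^ 2 * A ^ 2 * ((m + 2) ^ K * (m + 2 * K))
      = (2 * j + 1) ^ 2 * (m + 2 * K) * (A ^ 2 * (m + 2) ^ K) := by ring
    _ ≤ (2 * j + 1) ^ 2 * (m + 2 * K) * (m ^ K * B ^ 2) :=
        Nat.mul_le_mul_left _ (choose_middle_sub_sq_mul_pow_le m j hj)
    _ = (2 * j + 1) ^ 2 * B ^ 2 * (m ^ K * (m + 2 * K)) := by ring
    _ ≤ (2 * j + 1) ^ 2 * B ^ 2 * ((m + 2) ^ K * m) :=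
        Nat.mul_le_mul_left _ (pow_mul_add_two_mul_le m K)
    _ = (2 * j + 1) ^ 2 * m * ((m + 2) ^ K * B ^ 2) := by ring
    _ ≤ (2 * m + 1) * (m + 2 * K) * ((m + 2) ^ K * B ^ 2) :=
        Nat.mul_le_mul_right _ (by rw [odd_sq]; nlinarith)
    _ = (2 * m + 1) * B ^ 2 * ((m + 2) ^ K * (m + 2 * K)) := by ring

theorem two_mul_add_one_mul_centralBinom_sq_le (m : ℕ) :
    (2 * m + 1) * centralBinom m ^ 2 ≤ 16 ^ m := by
  induction m with
  | zero => simp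
  | succ m ih =>
    refine Nat.le_of_mul_le_mul_right (c := (m + 1) ^ 2) ?_ (by positivity)
    calc (2 * (m + 1) + 1) * centralBinom (m + 1) ^ 2 * (m + 1) ^ 2
        = (2 * m + 3) * ((m + 1) * centralBinom (m + 1)) ^ 2 := by ring
      _ = 4 * (2 * m + 1) * (2 * m + 3) * ((2 * m + 1) * centralBinom m ^ 2) := by
          rw [succ_mul_centralBinom_succ]; ring
      _ ≤ 16 * (m + 1) ^ 2 * 16 ^ m := Nat.mul_le_mul (by nlinarith) ih
      _ = 16 ^ (m + 1) * (m + 1) ^ 2 := by ring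

theorem two_mul_add_one_mul_choose_middle_sq_le (m : ℕ) :
    (2 * m + 1) * (2 * m + 1).choose m ^ 2 ≤ 4 * 16 ^ m := by
  have h := add_one_mul_choose_eq (2 * m) m
  rw [choose_symm_half] at h
  refine Nat.le_of_mul_le_mul_right (c := (m + 1) ^ 2) ?_ (by positivity)
  calc (2 * m + 1) * (2 * m + 1).choose m ^ 2 * (m + 1) ^ 2
      = (2 * m + 1) * ((2 * m + 1).choose m * (m + 1)) ^ 2 := by ring
    _ = (2 * m + 1) ^ 2 * ((2 * m + 1) * centralBinom m ^ 2) := by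
        rw [centralBinom, ← h]; ring
    _ ≤ (2 * (m + 1)) ^ 2 * 16 ^ m :=
        Nat.mul_le_mul (Nat.pow_le_pow_left (by omega) 2)
          (two_mul_add_one_mul_centralBinom_sq_le m)
    _ = 4 * 16 ^ m * (m + 1) ^ 2 := by ring

theorem mul_choose_middle_sub_le (m j : ℕ) (hj : j ≤ m) :
    (2 * j + 1) * (2 * m + 1).choose (m - j) ≤ 2 * 4 ^ m := by
  refine (Nat.pow_le_pow_iff_left two_ne_zero).mp ?_
  calc ((2 * j + 1) * (2 * m + 1).choose (m - j)) ^ 2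
      = (2 * j + 1) ^ 2 * (2 * m + 1).choose (m - j) ^ 2 := mul_pow ..
    _ ≤ (2 * m + 1) * (2 * m + 1).choose m ^ 2 := sq_mul_choose_middle_sub_sq_le m j hj
    _ ≤ 4 * 16 ^ m := two_mul_add_one_mul_choose_middle_sq_le m
    _ = (2 * 4 ^ m) ^ 2 := by rw [mul_pow, ← pow_mul, mul_comm m, pow_mul]; norm_num

end Nat

theorem degeneracy_two_mul (m j : ℕ) (hj : j ≤ m) :
    degeneracy (2 * m) j = (2 * j + 1) * (2 * m + 1).choose (m - j) / (2 * m + 1 : ℚ) := by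
  rw [degeneracy, Nat.mul_div_cancel_left m two_pos,
    Nat.cast_choose ℚ (by omega : m - j ≤ 2 * m + 1),
    show 2 * m + 1 - (m - j) = m + j + 1 by omega, Nat.factorial_succ (2 * m)]
  push_cast
  field_simp

/-- there is a constant `C > 0` such that for every even `N ≥ 2` and every
`0 ≤ j ≤ N/2`, the degeneracy satisfies `d_j ≤ C · 2^N / N`: every single angular
momentum subspace carries an `O(1/N)` fraction of the `2^N` spin states, uniformly
in `j`. -/
theorem degeneracy_le_const_mul_two_pow_div :
    ∃ C : ℚ, 0 < C ∧ ∀ N j : ℕ, 2 ≤ N → Even N → j ≤ N / 2 →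
      degeneracy N j ≤ C * 2 ^ N / N := by
  refine ⟨2, two_pos, fun N j hN hEven hj ↦ ?_⟩
  obtain ⟨m, rfl⟩ := even_iff_two_dvd.mp hEven
  rw [Nat.mul_div_cancel_left m two_pos] at hj
  have key : ((2 * j + 1) * (2 * m + 1).choose (m - j) : ℚ) ≤ 2 * 4 ^ m := by
    exact_mod_cast Nat.mul_choose_middle_sub_le m j hj
  have hm : (0 : ℚ) < 2 * m := by exact_mod_cast (by omega : 0 < 2 * m)
  rw [degeneracy_two_mul m j hj]
  calc _ ≤ (2 * 4 ^ m : ℚ) / (2 * m + 1) := by gcongr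
    _ ≤ 2 * 4 ^ m / (2 * m) := by gcongr; linarith
    _ = 2 * 2 ^ (2 * m) / ↑(2 * m) := by rw [pow_mul]; norm_num
end

section
/- Let k ≥ 3 be a natural number and let M(k) be the 4×4 real symmetric matrix with zero diagonal and off-diagonal entries M₁₂ = M₂₁ = √(3k), M₂₃ = M₃₂ = 2√(k−1), M₃₄ = M₄₃ = √(3(k−2)), all other entries zero. Then the characteristic polynomial of M(k) is X⁴ − 10(k−1)·X² + 9k(k−2), and the eigenvalues of M(k) are exactly the four real numbers ±√(5(k−1) ± √(16k² − 32k + 25)). -/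
open Polynomial

/-- The Dicke (`j = 3/2`) block of the `N = 3` Tavis–Cummings interaction Hamiltonian at
excitation number `k`: the `4 × 4` real symmetric matrix with zero diagonal and
off-diagonal entries `√(3k)`, `2√(k-1)`, `√(3(k-2))`. -/
noncomputable def dickeBlock3 (k : ℕ) : Matrix (Fin 4) (Fin 4) ℝ :=
  !![0, Real.sqrt (3 * (k : ℝ)), 0, 0;
     Real.sqrt (3 * (k : ℝ)), 0, 2 * Real.sqrt ((k : ℝ) - 1), 0;
     0, 2 * Real.sqrt ((k : ℝ) - 1), 0, Real.sqrt (3 * ((k : ℝ) - 2));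
     0, 0, Real.sqrt (3 * ((k : ℝ) - 2)), 0]

/-!
The block is tridiagonal with zero diagonal, so expanding the determinant of `X - M` gives the
even polynomial `X⁴ - (a² + b² + c²) X² + a²c²` in its off-diagonal entries `a, b, c`; here
`a² + b² + c² = 10(k-1)` and `a²c² = 9k(k-2)`. Writing it as `(X² - m)² - s²` with `m = 5(k-1)`
and `s² = 16k² - 32k + 25`, it factors as `(X² - (m + s))(X² - (m - s))`, and `k ≥ 2` gives
`0 ≤ s ≤ m`, so both factors have two real roots `±√(m ± s)`.
-/

theorem Matrix.charpoly_tridiagonal_zero_diagonal_fin_four {R : Type*} [CommRing R] (a b c : R) :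
    (!![0, a, 0, 0; a, 0, b, 0; 0, b, 0, c; 0, 0, c, 0] : Matrix (Fin 4) (Fin 4) R).charpoly =
      X ^ 4 - C (a ^ 2 + b ^ 2 + c ^ 2) * X ^ 2 + C (a ^ 2 * c ^ 2) := by
  have hcharmatrix :
      (!![0, a, 0, 0; a, 0, b, 0; 0, b, 0, c; 0, 0, c, 0] : Matrix (Fin 4) (Fin 4) R).charmatrix =
        !![X, -C a, 0, 0; -C a, X, -C b, 0; 0, -C b, X, -C c; 0, 0, -C c, X] := by
    ext i j
    fin_cases i <;> fin_cases j <;> simp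
  rw [Matrix.charpoly, hcharmatrix]
  simp [Matrix.det_succ_row_zero, Fin.sum_univ_succ, Fin.succAbove]
  ring

theorem dickeBlock3_charpoly (k : ℕ) (hk : 2 ≤ k) :
    (dickeBlock3 k).charpoly =
      X ^ 4 - C (10 * ((k : ℝ) - 1)) * X ^ 2 + C (9 * (k : ℝ) * ((k : ℝ) - 2)) := by
  have hk' : (2 : ℝ) ≤ k := by exact_mod_cast hk
  have ha : Real.sqrt (3 * (k : ℝ)) ^ 2 = 3 * k := Real.sq_sqrt (by linarith)
  have hb : (2 * Real.sqrt ((k : ℝ) - 1)) ^ 2 = 4 * (k - 1) := by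
    rw [mul_pow, Real.sq_sqrt (by linarith)]
    ring
  have hc : Real.sqrt (3 * ((k : ℝ) - 2)) ^ 2 = 3 * (k - 2) := Real.sq_sqrt (by linarith)
  rw [dickeBlock3, Matrix.charpoly_tridiagonal_zero_diagonal_fin_four, ha, hb, hc,
    show 3 * (k : ℝ) + 4 * (k - 1) + 3 * (k - 2) = 10 * (k - 1) by ring,
    show 3 * (k : ℝ) * (3 * (k - 2)) = 9 * k * (k - 2) by ring]

theorem biquadratic_eq_zero_iff {m s : ℝ} (hs : 0 ≤ s) (hsm : s ≤ m) (x : ℝ) :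
    x ^ 4 - 2 * m * x ^ 2 + (m ^ 2 - s ^ 2) = 0 ↔
      x = Real.sqrt (m + s) ∨ x = -Real.sqrt (m + s) ∨
        x = Real.sqrt (m - s) ∨ x = -Real.sqrt (m - s) := by
  have hfactor : x ^ 4 - 2 * m * x ^ 2 + (m ^ 2 - s ^ 2) =
      (x ^ 2 - Real.sqrt (m + s) ^ 2) * (x ^ 2 - Real.sqrt (m - s) ^ 2) := by
    rw [Real.sq_sqrt (by linarith), Real.sq_sqrt (by linarith)]
    ring
  rw [hfactor, mul_eq_zero, sub_eq_zero, sub_eq_zero, sq_eq_sq_iff_eq_or_eq_neg,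
    sq_eq_sq_iff_eq_or_eq_neg, or_assoc]

/-- for `k ≥ 3`, the characteristic polynomial of the matrix `M(k)` above
is `X⁴ - 10(k-1)X² + 9k(k-2)`, and its eigenvalues are exactly the four real numbers
`±√(5(k-1) ± √(16k² - 32k + 25))`. -/
theorem dickeBlock3_charpoly_and_eigenvalues (k : ℕ) (hk : 3 ≤ k) :
    (dickeBlock3 k).charpoly =
        X ^ 4 - C (10 * ((k : ℝ) - 1)) * X ^ 2 + C (9 * (k : ℝ) * ((k : ℝ) - 2)) ∧
      ∀ x : ℝ, (dickeBlock3 k).charpoly.IsRoot x ↔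
        (x = Real.sqrt (5 * ((k : ℝ) - 1) + Real.sqrt (16 * (k : ℝ) ^ 2 - 32 * (k : ℝ) + 25)) ∨
         x = -Real.sqrt (5 * ((k : ℝ) - 1) + Real.sqrt (16 * (k : ℝ) ^ 2 - 32 * (k : ℝ) + 25)) ∨
         x = Real.sqrt (5 * ((k : ℝ) - 1) - Real.sqrt (16 * (k : ℝ) ^ 2 - 32 * (k : ℝ) + 25)) ∨
         x = -Real.sqrt (5 * ((k : ℝ) - 1) - Real.sqrt (16 * (k : ℝ) ^ 2 - 32 * (k : ℝ) + 25))) := by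
  have hchar := dickeBlock3_charpoly k (by omega)
  refine ⟨hchar, fun x => ?_⟩
  have hk' : (3 : ℝ) ≤ k := by exact_mod_cast hk
  set s := Real.sqrt (16 * (k : ℝ) ^ 2 - 32 * k + 25)
  have hs_sq : s ^ 2 = 16 * (k : ℝ) ^ 2 - 32 * k + 25 := Real.sq_sqrt (by nlinarith)
  have hsm : s ≤ 5 * ((k : ℝ) - 1) := Real.sqrt_le_iff.mpr ⟨by linarith, by nlinarith⟩
  rw [← biquadratic_eq_zero_iff (Real.sqrt_nonneg _) hsm, hchar, IsRoot.def]
  simp only [eval_add, eval_sub, eval_mul, eval_pow, eval_X, eval_C]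
  constructor
  · intro h
    linear_combination h - hs_sq
  · intro h
    linear_combination h + hs_sq
end
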